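/- Boundary values of the refinement: A_{k+1}(1) = A_{k+1}(2k+1) equals the number of pairs (ρ, r) where ρ is a perfect matching of {0,...,2k+1} containing {0,1} and r is a root-connected orientation of G(ρ) with root {0,1}; by the merging property, this equals A_k evaluated on the singleton-root configuration, i.e., the number of pairs (σ, s) with σ a partition of {0,...,2k} having {0} as a block and all other blocks of size 2, and s a root-connected orientation with root {0}. -/

import Mathlib

/-- Two blocks `B`, `B'` form a crossing: there are `i, k ∈ B` and `j, l ∈ B'`
with `i < j < k < l` or `i > j > k > l`. -/
def Crosses (B B' : Finset ℕ) : Prop :=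
  ∃ i ∈ B, ∃ k ∈ B, ∃ j ∈ B', ∃ l ∈ B',
    (i < j ∧ j < k ∧ k < l) ∨ (i > j ∧ j > k ∧ k > l)

/-- `ρ` is a set partition of `{0, ..., n-1}`. -/
def IsPartitionOf (n : ℕ) (ρ : Finset (Finset ℕ)) : Prop :=
  (∀ B ∈ ρ, B.Nonempty) ∧
  (∀ B ∈ ρ, ∀ B' ∈ ρ, B ≠ B' → Disjoint B B') ∧
  ρ.sup id = Finset.range n

/-- `r` is an orientation of the crossing graph `G(ρ)`: it relates exactly the
pairs of distinct crossing blocks of `ρ`, choosing one direction for each edge. -/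
def IsOrientation (ρ : Finset (Finset ℕ)) (r : Finset ℕ → Finset ℕ → Prop) : Prop :=
  (∀ B B', r B B' → B ∈ ρ ∧ B' ∈ ρ ∧ B ≠ B' ∧ Crosses B B') ∧
  (∀ B ∈ ρ, ∀ B' ∈ ρ, B ≠ B' → Crosses B B' → (r B B' ↔ ¬ r B' B))

/-- An orientation is acyclic if it has no directed cycle. -/
def AcyclicRel (r : Finset ℕ → Finset ℕ → Prop) : Prop :=
  ∀ B, ¬ Relation.TransGen r B B

/-- `r` is a root-connected orientation of `G(ρ)` with root `S`: it is an acyclic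
orientation and `S` is its unique source. -/
def RootConnected (ρ : Finset (Finset ℕ)) (r : Finset ℕ → Finset ℕ → Prop)
    (S : Finset ℕ) : Prop :=
  IsOrientation ρ r ∧ AcyclicRel r ∧ S ∈ ρ ∧ (∀ B', ¬ r B' S) ∧
    (∀ B ∈ ρ, (∀ B', ¬ r B' B) → B = S)

/-- `ρ ∈ M_S(n)`: a partition of `{0,...,n-1}` with `S` as a block and all
other blocks of size 2. -/
def MSPartition (n : ℕ) (S : Finset ℕ) (ρ : Finset (Finset ℕ)) : Prop :=
  IsPartitionOf n ρ ∧ S ∈ ρ ∧ ∀ B ∈ ρ, B ≠ S → B.card = 2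

/-- The number of pairs `(ρ, r)` with `ρ ∈ M_S(n)` and `r` a root-connected
orientation of `G(ρ)` with root `S`.  (This is `A_{k+1}(S)` when `n = |S| + 2k`.) -/
noncomputable def countA (n : ℕ) (S : Finset ℕ) : ℕ :=
  Nat.card {p : Finset (Finset ℕ) × (Finset ℕ → Finset ℕ → Prop) //
    MSPartition n S p.1 ∧ RootConnected p.1 p.2 S}

/-! Crossing depends only on the relative order of the elements of two blocks, so the counts are
invariant under the reflection `x ↦ n - 1 - x` and, more generally, under any bijection of
blocks that preserves crossings between distinct blocks and carries one family of partitions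
onto the other. If the root `S ∪ {n}` crosses the same blocks as `S`, swapping these two blocks
is such a bijection, so the top element `n` merges into the root. This applies to `{n, a}` with
`a` cyclically adjacent to `n`, where neither root crosses anything. Reflection moves `{0, 1}`
to `{2k, 2k+1}`, so both boundary roots reduce to a singleton root. -/

open Function

theorem crosses_comm {B B' : Finset ℕ} : Crosses B B' ↔ Crosses B' B := by
  constructor <;>
  · rintro ⟨i, hi, k, hk, j, hj, l, hl, h | h⟩
    · exact ⟨l, hl, j, hj, k, hk, i, hi, Or.inr ⟨by omega, by omega, by omega⟩⟩
    · exact ⟨l, hl, j, hj, k, hk, i, hi, Or.inl ⟨by omega, by omega, by omega⟩⟩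

theorem not_crosses_singleton (a : ℕ) (B : Finset ℕ) : ¬ Crosses {a} B := by
  rintro ⟨i, hi, k, hk, j, -, l, -, h⟩
  rw [Finset.mem_singleton] at hi hk
  omega

theorem not_crosses_pair_of_subset_range {n a : ℕ} (ha : a + 1 = n ∨ a = 0) {B : Finset ℕ}
    (hB : B ⊆ Finset.range n) : ¬ Crosses {n, a} B := by
  rintro ⟨i, hi, k, hk, j, hj, l, hl, h⟩
  simp only [Finset.mem_insert, Finset.mem_singleton] at hi hk
  have := Finset.mem_range.1 (hB hj)
  have := Finset.mem_range.1 (hB hl)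
  omega

theorem IsPartitionOf.subset_range {n : ℕ} {ρ : Finset (Finset ℕ)} (hρ : IsPartitionOf n ρ)
    {B : Finset ℕ} (hB : B ∈ ρ) : B ⊆ Finset.range n :=
  hρ.2.2 ▸ Finset.le_sup (f := id) hB

section Transport

variable (φ : Finset ℕ ≃ Finset ℕ)

theorem transGen_onFun_symm_iff (r : Finset ℕ → Finset ℕ → Prop) (B B' : Finset ℕ) :
    Relation.TransGen (r on ⇑φ.symm) B B' ↔ Relation.TransGen r (φ.symm B) (φ.symm B') := by
  refine ⟨fun h => Relation.TransGen.lift φ.symm (fun _ _ h => h) _ _ h, fun h => ?_⟩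
  simpa [onFun] using
    Relation.TransGen.lift φ (p := r on ⇑φ.symm) (fun _ _ h => by simpa [onFun] using h) _ _ h

theorem acyclicRel_onFun_symm_iff (r : Finset ℕ → Finset ℕ → Prop) :
    AcyclicRel (r on ⇑φ.symm) ↔ AcyclicRel r := by
  simp only [AcyclicRel, transGen_onFun_symm_iff]
  exact φ.symm.forall_congr_right (q := fun B => ¬ Relation.TransGen r B B)

variable {φ} {ρ : Finset (Finset ℕ)}
  (hcross : ∀ B ∈ ρ, ∀ B' ∈ ρ, B ≠ B' → (Crosses (φ B) (φ B') ↔ Crosses B B'))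
include hcross

theorem isOrientation_map_iff (r : Finset ℕ → Finset ℕ → Prop) :
    IsOrientation (ρ.map φ.toEmbedding) (r on ⇑φ.symm) ↔ IsOrientation ρ r := by
  refine and_congr (Equiv.forall₂_congr' φ.symm φ.symm fun {C C'} => ?_) ?_
  · simp only [onFun, Equiv.symm_symm, Equiv.symm_apply_apply, Finset.mem_map_equiv,
      φ.injective.ne_iff]
    exact imp_congr_right fun _ => and_congr_right fun hC => and_congr_right fun hC' =>
      and_congr_right fun hne => hcross C hC C' hC' hne
  · simp only [Finset.forall_mem_map, Equiv.coe_toEmbedding, onFun, Equiv.symm_apply_apply,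
      φ.injective.ne_iff]
    exact forall₂_congr fun C hC => forall₂_congr fun C' hC' =>
      imp_congr_right fun hne => by rw [hcross C hC C' hC' hne]

theorem rootConnected_map_iff (r : Finset ℕ → Finset ℕ → Prop) (S : Finset ℕ) :
    RootConnected (ρ.map φ.toEmbedding) (r on ⇑φ.symm) (φ S) ↔ RootConnected ρ r S := by
  have hsource : ∀ C, (∀ B, ¬ (r on ⇑φ.symm) B (φ C)) ↔ ∀ B, ¬ r B C := fun C => by
    simpa only [onFun, Equiv.symm_apply_apply] using
      φ.symm.forall_congr_right (q := fun B => ¬ r B C)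
  simp only [RootConnected, Finset.forall_mem_map]
  simp only [isOrientation_map_iff hcross, acyclicRel_onFun_symm_iff, Finset.mem_map_equiv,
    Equiv.symm_apply_apply, hsource, Equiv.coe_toEmbedding, φ.injective.eq_iff]

end Transport

theorem countA_eq_of_equiv {n n' : ℕ} {S : Finset ℕ} (φ : Finset ℕ ≃ Finset ℕ)
    (hpart : ∀ ρ, MSPartition n' (φ S) (ρ.map φ.toEmbedding) ↔ MSPartition n S ρ)
    (hcross : ∀ ρ, MSPartition n S ρ → ∀ B ∈ ρ, ∀ B' ∈ ρ, B ≠ B' →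
      (Crosses (φ B) (φ B') ↔ Crosses B B')) :
    countA n' (φ S) = countA n S := by
  refine (Nat.card_congr ((φ.finsetCongr.prodCongr
    (φ.arrowCongr (φ.arrowCongr (Equiv.refl Prop)))).subtypeEquiv fun p => ?_)).symm
  change _ ↔ MSPartition n' (φ S) (p.1.map φ.toEmbedding) ∧
    RootConnected (p.1.map φ.toEmbedding) (p.2 on ⇑φ.symm) (φ S)
  rw [hpart]
  exact and_congr_right fun hρ => (rootConnected_map_iff (hcross _ hρ) _ _).symm

section Relabelling

variable {n n' : ℕ} (σ : Equiv.Perm ℕ)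

theorem isPartitionOf_map_finsetCongr_iff
    (hσ : (Finset.range n).map σ.toEmbedding = Finset.range n') (ρ : Finset (Finset ℕ)) :
    IsPartitionOf n' (ρ.map σ.finsetCongr.toEmbedding) ↔ IsPartitionOf n ρ := by
  have hsup : (ρ.map σ.finsetCongr.toEmbedding).sup id = (ρ.sup id).map σ.toEmbedding := by
    rw [Finset.sup_map]
    exact (Finset.apply_sup_eq_sup_comp (Finset.map σ.toEmbedding)
      (fun _ _ => Finset.map_union _ _) (Finset.map_empty _)).symm
  simp only [IsPartitionOf, Finset.forall_mem_map, Equiv.coe_toEmbedding,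
    Equiv.finsetCongr_apply, Finset.map_nonempty, ne_eq, Finset.disjoint_map, hsup, ← hσ,
    Finset.map_inj]

theorem mSPartition_map_finsetCongr_iff
    (hσ : (Finset.range n).map σ.toEmbedding = Finset.range n') (S : Finset ℕ)
    (ρ : Finset (Finset ℕ)) :
    MSPartition n' (σ.finsetCongr S) (ρ.map σ.finsetCongr.toEmbedding) ↔ MSPartition n S ρ := by
  simp only [MSPartition, isPartitionOf_map_finsetCongr_iff σ hσ, Finset.forall_mem_map]
  simp only [Finset.mem_map_equiv, Equiv.symm_apply_apply]
  simp only [Equiv.coe_toEmbedding, Equiv.finsetCongr_apply, ne_eq, Finset.map_inj,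
    Finset.card_map]

theorem crosses_map_iff_of_strictAntiOn {B B' : Finset ℕ} (hσ : StrictAntiOn σ ↑(B ∪ B')) :
    Crosses (B.map σ.toEmbedding) (B'.map σ.toEmbedding) ↔ Crosses B B' := by
  simp only [Crosses, Finset.map_eq_image, Finset.exists_mem_image, Equiv.coe_toEmbedding]
  constructor <;> rintro ⟨i, hi, k, hk, j, hj, l, hl, h⟩ <;>
    refine ⟨i, hi, k, hk, j, hj, l, hl, ?_⟩ <;>
    simp only [gt_iff_lt, hσ.lt_iff_gt, Finset.coe_union, Set.mem_union, Finset.mem_coe, hi, hj,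
      hk, hl, true_or, or_true] at h ⊢ <;>
    tauto

def reflect (n : ℕ) : Equiv.Perm ℕ :=
  Involutive.toPerm (fun x => if x < n then n - 1 - x else x) fun x => by
    dsimp only; split_ifs <;> omega

theorem reflect_apply (n x : ℕ) : reflect n x = if x < n then n - 1 - x else x := rfl

theorem strictAntiOn_reflect (n : ℕ) : StrictAntiOn (reflect n) (Set.Iio n) := by
  intro x hx y hy hxy
  simp only [Set.mem_Iio] at hx hy
  simp only [reflect_apply, hx, hy, if_true]
  omega

theorem map_reflect_range (n : ℕ) :
    (Finset.range n).map (reflect n).toEmbedding = Finset.range n := by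
  refine Finset.eq_of_subset_of_card_le (fun y hy => ?_) (by rw [Finset.card_map])
  obtain ⟨x, hx, rfl⟩ := Finset.mem_map.1 hy
  simp only [Finset.mem_range] at hx ⊢
  simp only [Equiv.coe_toEmbedding, reflect_apply, hx, if_true]
  omega

theorem countA_reflect (n : ℕ) (S : Finset ℕ) :
    countA n ((reflect n).finsetCongr S) = countA n S :=
  countA_eq_of_equiv _ (mSPartition_map_finsetCongr_iff _ (map_reflect_range n) S)
    fun _ hρ _ hB _ hB' _ => crosses_map_iff_of_strictAntiOn _ <|
      (strictAntiOn_reflect n).mono <| by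
        rw [← Finset.coe_range, Finset.coe_subset]
        exact Finset.union_subset (hρ.1.subset_range hB) (hρ.1.subset_range hB')

end Relabelling

section Merging

theorem mSPartition_insert_iff {m : ℕ} {R : Finset ℕ} {μ : Finset (Finset ℕ)} (hR : R ∉ μ) :
    MSPartition m R (insert R μ) ↔
      (R.Nonempty ∧ (∀ B ∈ μ, Disjoint R B) ∧ R ∪ μ.sup id = Finset.range m) ∧
        (∀ B ∈ μ, B.Nonempty) ∧ (∀ B ∈ μ, ∀ B' ∈ μ, B ≠ B' → Disjoint B B') ∧
          ∀ B ∈ μ, B.card = 2 := by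
  have hdisj : (∀ B ∈ insert R μ, ∀ B' ∈ insert R μ, B ≠ B' → Disjoint B B') ↔
      (∀ B ∈ μ, ∀ B' ∈ μ, B ≠ B' → Disjoint B B') ∧ ∀ B ∈ μ, Disjoint R B := by
    change (↑(insert R μ) : Set (Finset ℕ)).Pairwise Disjoint ↔ _
    rw [Finset.coe_insert, Set.pairwise_insert_of_symm_of_notMem (by simpa using hR)]
    rfl
  have hcard : (∀ B ∈ insert R μ, B ≠ R → B.card = 2) ↔ ∀ B ∈ μ, B.card = 2 := by
    simp only [Finset.forall_mem_insert, ne_eq, not_true_eq_false, false_imp_iff, true_and]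
    exact forall₂_congr fun B hB => by simp [ne_of_mem_of_not_mem hB hR]
  rw [MSPartition, IsPartitionOf, hdisj, hcard, Finset.sup_insert]
  simp only [Finset.forall_mem_insert, Finset.mem_insert_self, true_and, id]
  tauto

variable {n : ℕ} {S : Finset ℕ} (hS : S.Nonempty) (hn : n ∉ S)
include hS hn

theorem mSPartition_insert_insert_iff {μ : Finset (Finset ℕ)} (hSμ : S ∉ μ)
    (hTμ : insert n S ∉ μ) :
    MSPartition (n + 1) (insert n S) (insert (insert n S) μ) ↔ MSPartition n S (insert S μ) := by
  rw [mSPartition_insert_iff hTμ, mSPartition_insert_iff hSμ]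
  refine and_congr_left' ?_
  simp only [Finset.insert_nonempty, hS, true_and, Finset.disjoint_insert_left,
    Finset.insert_union, Finset.range_add_one]
  constructor
  · rintro ⟨hdisj, hcover⟩
    have hnU : n ∉ S ∪ μ.sup id := by
      simpa [Finset.mem_sup, hn] using fun B hB => (hdisj B hB).1
    refine ⟨fun B hB => (hdisj B hB).2, ?_⟩
    rw [← Finset.erase_insert hnU, hcover, Finset.erase_insert Finset.notMem_range_self]
  · rintro ⟨hdisj, hcover⟩
    have hnB : ∀ B ∈ μ, n ∉ B := fun B hB hnB => Finset.notMem_range_self <|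
      hcover ▸ Finset.mem_union_right S (Finset.mem_sup.2 ⟨B, hB, hnB⟩)
    exact ⟨fun B hB => ⟨hnB B hB, hdisj B hB⟩, by rw [hcover]⟩

theorem mSPartition_map_swap_iff (ρ : Finset (Finset ℕ)) :
    MSPartition n S (ρ.map (Equiv.swap (insert n S) S).toEmbedding) ↔
      MSPartition (n + 1) (insert n S) ρ := by
  set T := insert n S
  set φ := Equiv.swap T S
  have hST : S ≠ T := fun h => hn (h ▸ Finset.mem_insert_self n S)
  -- both sides force `T ∈ ρ` and `S ∉ ρ`, and then the swap just replaces the root `T` by `S`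
  by_cases hρ : T ∈ ρ ∧ S ∉ ρ
  · obtain ⟨hT, hSρ⟩ := hρ
    have hφρ : ρ.map φ.toEmbedding = insert S (ρ.erase T) := by
      ext B
      simp only [Finset.mem_map_equiv, φ, Equiv.symm_swap, Finset.mem_insert, Finset.mem_erase]
      obtain rfl | hBT := eq_or_ne B T
      · simp [hSρ, hST.symm]
      obtain rfl | hBS := eq_or_ne B S
      · simp [hT]
      · simp [Equiv.swap_apply_of_ne_of_ne hBT hBS, hBT, hBS]
    rw [hφρ, ← mSPartition_insert_insert_iff hS hn (fun h => hSρ (Finset.mem_of_mem_erase h))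
      (Finset.notMem_erase T ρ), Finset.insert_erase hT]
  · have hL : MSPartition n S (ρ.map φ.toEmbedding) → T ∈ ρ ∧ S ∉ ρ := by
      intro h
      refine ⟨by simpa [φ] using h.2.1, fun hSρ => Finset.notMem_range_self (n := n) ?_⟩
      have hT : T ∈ ρ.map φ.toEmbedding := by simpa [φ] using hSρ
      exact h.1.subset_range hT (Finset.mem_insert_self n S)
    have hR : MSPartition (n + 1) T ρ → T ∈ ρ ∧ S ∉ ρ := by
      intro h
      refine ⟨h.2.1, fun hSρ => hS.ne_empty ?_⟩
      exact (Finset.disjoint_self_iff_empty S).1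
        ((h.1.2.1 S hSρ T h.2.1 hST).mono_right (Finset.subset_insert n S))
    exact iff_of_false (mt hL hρ) (mt hR hρ)

theorem countA_insert_of_crosses_iff
    (hcross : ∀ B ⊆ Finset.range n, Crosses (insert n S) B ↔ Crosses S B) :
    countA (n + 1) (insert n S) = countA n S := by
  set T := insert n S
  have hfix : ∀ ρ, MSPartition (n + 1) T ρ → ∀ C ∈ ρ, C ≠ T →
      Equiv.swap T S C = C ∧ C ⊆ Finset.range n := by
    intro ρ hρ C hC hCT
    have hdisj : Disjoint C T := hρ.1.2.1 C hC T hρ.2.1 hCT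
    have hCS : C ≠ S := by
      rintro rfl
      exact hS.ne_empty ((Finset.disjoint_self_iff_empty C).1
        (hdisj.mono_right (Finset.subset_insert n C)))
    refine ⟨Equiv.swap_apply_of_ne_of_ne hCT hCS, fun x hx => ?_⟩
    have hxn : x ≠ n := fun h => Finset.disjoint_left.1 hdisj hx (h ▸ Finset.mem_insert_self n S)
    have := Finset.mem_range.1 (hρ.1.subset_range hC hx)
    exact Finset.mem_range.2 (by omega)
  have key := countA_eq_of_equiv (Equiv.swap T S)
    (fun ρ => by rw [Equiv.swap_apply_left]; exact mSPartition_map_swap_iff hS hn ρ) ?_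
  · rwa [Equiv.swap_apply_left, eq_comm] at key
  intro ρ hρ B hB B' hB' hne
  obtain rfl | hBT := eq_or_ne B T
  · obtain ⟨hfix', hsub⟩ := hfix ρ hρ B' hB' hne.symm
    rw [Equiv.swap_apply_left, hfix', hcross B' hsub]
  obtain rfl | hB'T := eq_or_ne B' T
  · obtain ⟨hfix', hsub⟩ := hfix ρ hρ B hB hne
    rw [Equiv.swap_apply_left, hfix', crosses_comm, ← hcross B hsub, crosses_comm]
  · rw [(hfix ρ hρ B hB hBT).1, (hfix ρ hρ B' hB' hB'T).1]

end Merging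

theorem countA_merge_pair {n a : ℕ} (han : a < n) (ha : a + 1 = n ∨ a = 0) :
    countA (n + 1) {n, a} = countA n {a} :=
  countA_insert_of_crosses_iff (Finset.singleton_nonempty a) (by simpa using han.ne')
    fun _ hB => iff_of_false (not_crosses_pair_of_subset_range ha hB) (not_crosses_singleton a _)

/-- Boundary values of the refinement: `A_{k+1}(1) = A_{k+1}(2k+1)`, and by
merging the consecutive pair `0, 1` of the root, this equals the count for the
singleton root `{0}` on the ground set `{0,...,2k}`. -/
theorem refined_lassalle_boundary (k : ℕ) :
    countA (2 * k + 2) {0, 1} = countA (2 * k + 2) {0, 2 * k + 1} ∧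
    countA (2 * k + 2) {0, 1} = countA (2 * k + 1) {0} := by
  have hends : countA (2 * k + 2) {0, 2 * k + 1} = countA (2 * k + 1) {0} := by
    rw [Finset.pair_comm]
    exact countA_merge_pair (by omega) (Or.inr rfl)
  have hstart : countA (2 * k + 2) {0, 1} = countA (2 * k + 1) {0} := calc
    countA (2 * k + 2) {0, 1} = countA (2 * k + 2) {2 * k + 1, 2 * k} := by
      rw [← countA_reflect]; simp [reflect_apply]
    _ = countA (2 * k + 1) {2 * k} := countA_merge_pair (by omega) (Or.inl rfl)
    _ = countA (2 * k + 1) {0} := by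
      rw [← countA_reflect]; simp [reflect_apply]
  exact ⟨hstart.trans hends.symm, hstart⟩
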